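/- arXiv:2209.03942 — 2 statements merged into one kernel-verified Lean document; each statement's English description precedes it below -/
import Mathlib

section
/- Let n₀ ≥ 0, m > 0, k ≥ 0 be real numbers and set n_t := n₀ + t·(m+k) for each natural number t. Then for every natural number t ≥ 0, 1 + Σ_{i=1}^{t} (k/n_i) · Π_{j=i+1}^{t} (n_j − m)/n_j ≤ (m+k)/m. -/
/-! Writing `S t` for the sum, peeling off the last index gives
`S (t + 1) = (n_{t+1} - m) / n_{t+1} * S t + k / n_{t+1}`, an affine map with nonnegative slope
of which `k / m` is a fixed point. Since `S 0 = 0 ≤ k / m`, induction keeps `S t ≤ k / m`. -/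

open Finset

theorem sum_Icc_mul_prod_Icc_succ {R : Type*} [CommSemiring R] (f g : ℕ → R) (t : ℕ) :
    ∑ i ∈ Icc 1 (t + 1), f i * ∏ j ∈ Icc (i + 1) (t + 1), g j
      = g (t + 1) * ∑ i ∈ Icc 1 t, f i * ∏ j ∈ Icc (i + 1) t, g j + f (t + 1) := by
  rw [sum_Icc_succ_top (by omega), Icc_eq_empty (a := t + 1 + 1) (by omega), prod_empty, mul_one, mul_sum]
  congr 1
  refine sum_congr rfl fun i hi => ?_
  rw [prod_Icc_succ_top (by have := (mem_Icc.mp hi).2; omega)]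
  ring

theorem sum_Icc_mul_prod_Icc_le {R : Type*} [CommSemiring R] [PartialOrder R] [IsOrderedRing R]
    {f g : ℕ → R} {c : R} (hc : 0 ≤ c) (hg : ∀ j, 0 ≤ g (j + 1))
    (hstep : ∀ j, g (j + 1) * c + f (j + 1) ≤ c) (t : ℕ) :
    ∑ i ∈ Icc 1 t, f i * ∏ j ∈ Icc (i + 1) t, g j ≤ c := by
  induction t with
  | zero => simpa using hc
  | succ t ih =>
    rw [sum_Icc_mul_prod_Icc_succ]
    calc _ ≤ g (t + 1) * c + f (t + 1) := by gcongr; exact hg t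
      _ ≤ c := hstep t

theorem sub_div_mul_div_add_div_eq {K : Type*} [Field K] {x m : K} (hx : x ≠ 0) (hm : m ≠ 0)
    (k : K) : (x - m) / x * (k / m) + k / x = k / m := by
  field_simp
  ring

theorem sum_prod_le_ratio
    (n₀ m k : ℝ) (hn₀ : 0 ≤ n₀) (hm : 0 < m) (hk : 0 ≤ k)
    (n : ℕ → ℝ) (hn : ∀ t : ℕ, n t = n₀ + t * (m + k)) :
    ∀ t : ℕ,
      1 + ∑ i ∈ Finset.Icc 1 t, (k / n i) * ∏ j ∈ Finset.Icc (i + 1) t, (n j - m) / n j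
        ≤ (m + k) / m := by
  intro t
  have hn_ge : ∀ j : ℕ, m ≤ n (j + 1) := fun j => by
    rw [hn]
    push_cast
    nlinarith [(j.cast_nonneg : (0 : ℝ) ≤ j)]
  have hbound := sum_Icc_mul_prod_Icc_le (f := fun i => k / n i) (g := fun j => (n j - m) / n j)
    (div_nonneg hk hm.le)
    (fun j => div_nonneg (sub_nonneg.2 (hn_ge j)) (hm.trans_le (hn_ge j)).le)
    (fun j => (sub_div_mul_div_add_div_eq (hm.trans_le (hn_ge j)).ne' hm.ne' k).le) t
  rw [add_div, div_self hm.ne']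
  linarith
end

section
/- Let n₀ > 0, m > 0, k ≥ 0 be real numbers and set n_t := n₀ + t·(m+k). Let δ : ℕ → ℝ be nonnegative, and let β, γ : ℕ → ℝ be sequences such that for every t ≥ 1, β_t = (n_{t-1}/n_t)·β_{t-1} + (m/n_t)·β₀ + (k/n_t)·γ_{t-1}, and such that |β_t − γ_t| ≤ δ_t for every t ≥ 0. Then for every t ≥ 0, |β₀ − β_t| ≤ Σ_{i=1}^{t} δ_{i-1} · (k/n_i) · Π_{j=i+1}^{t} (n_j − m)/n_j. -/
/-!
Since `n (t + 1) = n t + (m + k)`, subtracting the recursion from `β 0` gives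
`β 0 - β (t + 1) = (n (t + 1) - m) / n (t + 1) * (β 0 - β t) + k / n (t + 1) * (β t - γ t)`,
with both coefficients nonnegative. Taking absolute values yields a linear one-step inequality
for `|β 0 - β t|`, and unrolling it from `|β 0 - β 0| = 0` gives the sum.
-/

open Finset

theorem sum_Icc_succ_mul_prod_Icc {R : Type*} [CommSemiring R] (c d : ℕ → R) (t : ℕ) :
    ∑ i ∈ Icc 1 (t + 1), d i * ∏ j ∈ Icc (i + 1) (t + 1), c j =
      c (t + 1) * ∑ i ∈ Icc 1 t, d i * ∏ j ∈ Icc (i + 1) t, c j + d (t + 1) := by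
  rw [sum_Icc_succ_top (by omega), Icc_eq_empty (a := t + 1 + 1) (by omega), prod_empty, mul_one,
    mul_sum]
  congr 1
  refine sum_congr rfl fun i hi => ?_
  rw [prod_Icc_succ_top (by simp at hi; omega)]
  ring

theorem le_sum_mul_prod_of_le_mul_add {R : Type*} [CommSemiring R] [PartialOrder R]
    [IsOrderedRing R] {e c d : ℕ → R} (he : e 0 ≤ 0)
    (hc : ∀ t, 0 ≤ c (t + 1)) (hstep : ∀ t, e (t + 1) ≤ c (t + 1) * e t + d (t + 1)) (t : ℕ) :
    e t ≤ ∑ i ∈ Icc 1 t, d i * ∏ j ∈ Icc (i + 1) t, c j := by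
  induction t with
  | zero => simpa using he
  | succ t ih =>
    rw [sum_Icc_succ_mul_prod_Icc]
    exact (hstep t).trans (by gcongr; exact hc t)

section FeedbackStep

variable {a b m k β₀ β β' γ : ℝ}

theorem sub_eq_of_feedback_update (hb : b = a + (m + k)) (hb₀ : b ≠ 0)
    (hβ' : β' = a / b * β + m / b * β₀ + k / b * γ) :
    β₀ - β' = (b - m) / b * (β₀ - β) + k / b * (β - γ) := by
  subst hβ' hb
  field_simp
  ring

theorem abs_sub_le_of_feedback_update {δ : ℝ} (ha : 0 ≤ a) (hk : 0 ≤ k)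
    (hb : b = a + (m + k)) (hb₀ : 0 < b)
    (hβ' : β' = a / b * β + m / b * β₀ + k / b * γ) (hcal : |β - γ| ≤ δ) :
    |β₀ - β'| ≤ (b - m) / b * |β₀ - β| + k / b * δ := by
  have hc : 0 ≤ (b - m) / b := div_nonneg (by linarith) hb₀.le
  have hkb : 0 ≤ k / b := div_nonneg hk hb₀.le
  calc |β₀ - β'| ≤ |(b - m) / b * (β₀ - β)| + |k / b * (β - γ)| := by
        rw [sub_eq_of_feedback_update hb hb₀.ne' hβ']
        exact abs_add_le _ _
    _ = (b - m) / b * |β₀ - β| + k / b * |β - γ| := by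
        rw [abs_mul, abs_mul, abs_of_nonneg hc, abs_of_nonneg hkb]
    _ ≤ (b - m) / b * |β₀ - β| + k / b * δ := by gcongr

end FeedbackStep

theorem feedback_intermediate_bound_general
    (n₀ m k : ℝ) (hn₀ : 0 < n₀) (hm : 0 < m) (hk : 0 ≤ k)
    (n : ℕ → ℝ) (hn : ∀ t : ℕ, n t = n₀ + t * (m + k))
    (δ β γ : ℕ → ℝ)
    (hβ : ∀ t : ℕ, 1 ≤ t →
      β t = (n (t - 1) / n t) * β (t - 1) + (m / n t) * β 0 + (k / n t) * γ (t - 1))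
    (hcal : ∀ t : ℕ, |β t - γ t| ≤ δ t) :
    ∀ t : ℕ, |β 0 - β t| ≤
      ∑ i ∈ Finset.Icc 1 t, δ (i - 1) * (k / n i) * ∏ j ∈ Finset.Icc (i + 1) t, (n j - m) / n j := by
  have hpos : ∀ t, 0 < n t := fun t => by rw [hn]; positivity
  have hsucc : ∀ t : ℕ, n (t + 1) = n t + (m + k) := fun t => by simp only [hn]; push_cast; ring
  have hstep : ∀ t, |β 0 - β (t + 1)| ≤
      (n (t + 1) - m) / n (t + 1) * |β 0 - β t| + δ t * (k / n (t + 1)) := fun t => by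
    rw [mul_comm (δ t)]
    exact abs_sub_le_of_feedback_update (hpos t).le hk (hsucc t) (hpos (t + 1))
      (by simpa using hβ (t + 1) le_add_self) (hcal t)
  intro t
  refine le_sum_mul_prod_of_le_mul_add (e := fun t => |β 0 - β t|)
    (c := fun j => (n j - m) / n j) (d := fun i => δ (i - 1) * (k / n i))
    (by simp) (fun t => ?_) (fun t => by simpa using hstep t) t
  exact div_nonneg (by linarith [hsucc t, hpos t]) (hpos (t + 1)).le

theorem feedback_intermediate_bound
    (n₀ m k : ℝ) (hn₀ : 0 < n₀) (hm : 0 < m) (hk : 0 ≤ k)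
    (n : ℕ → ℝ) (hn : ∀ t : ℕ, n t = n₀ + t * (m + k))
    (δ β γ : ℕ → ℝ)
    (hδ_nonneg : ∀ t, 0 ≤ δ t)
    (hβ : ∀ t : ℕ, 1 ≤ t →
      β t = (n (t - 1) / n t) * β (t - 1) + (m / n t) * β 0 + (k / n t) * γ (t - 1))
    (hcal : ∀ t : ℕ, |β t - γ t| ≤ δ t) :
    ∀ t : ℕ, |β 0 - β t| ≤
      ∑ i ∈ Finset.Icc 1 t, δ (i - 1) * (k / n i) * ∏ j ∈ Finset.Icc (i + 1) t, (n j - m) / n j :=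
  feedback_intermediate_bound_general n₀ m k hn₀ hm hk n hn δ β γ hβ hcal
end
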